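/- Let a = (a₁,a₂), b = (b₁,b₂) ∈ B_PD \ {(1,2.5),(2.5,1)} and ε₁, ε₂ > 0. If a₁ < b₁ ≤ 2, then every trajectory (x̄_t)_{t≥1} of the dynamical system induced by the profile (s₁^{a,ε₁}, s₂^{b,ε₂}), from any initial point in 𝔖, converges to b as t → ∞. -/

import Mathlib

/- Semi-cooperative strategies in the repeated Prisoner's Dilemma (Section 4 of the
   paper). Actions: `true` = C (cooperate), `false` = D (defect). The payoff plane
   is the Euclidean plane ℝ². -/

/-- The Euclidean plane. -/
abbrev E2 := EuclideanSpace ℝ (Fin 2)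

/-- The point (a, b) of the Euclidean plane. -/
noncomputable def pt (a b : ℝ) : E2 := (WithLp.equiv 2 (Fin 2 → ℝ)).symm ![a, b]

/-- The vector payoff function of the Prisoner's Dilemma:
    u(C,C)=(2,2), u(C,D)=(0,3), u(D,C)=(3,0), u(D,D)=(1,1). -/
noncomputable def payoffPD : Bool → Bool → E2
  | true,  true  => pt 2 2
  | true,  false => pt 0 3
  | false, true  => pt 3 0
  | false, false => pt 1 1

/-- 𝔖 = conv{(2,2),(0,3),(3,0),(1,1)}. -/
def SPD : Set E2 := convexHull ℝ {pt 2 2, pt 0 3, pt 3 0, pt 1 1}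

/-- The set of β-core payoffs of the Prisoner's Dilemma:
    {(x, 3−x/2) : 1 ≤ x ≤ 2} ∪ {(3−y/2, y) : 1 ≤ y ≤ 2}. -/
def BPD : Set E2 :=
  {p | ∃ x : ℝ, 1 ≤ x ∧ x ≤ 2 ∧ p = pt x (3 - x / 2)} ∪
  {p | ∃ y : ℝ, 1 ≤ y ∧ y ≤ 2 ∧ p = pt (3 - y / 2) y}

/-- T₁(v) = {x ∈ 𝔖 : x₂ ≤ ((v₂−1)/(v₁−1))·x₁ + (v₁−v₂)/(v₁−1)}. -/
def T1 (v : E2) : Set E2 :=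
  {x ∈ SPD | x 1 ≤ (v 1 - 1) / (v 0 - 1) * x 0 + (v 0 - v 1) / (v 0 - 1)}

/-- T₂(v) = {x ∈ 𝔖 : x₂ ≥ ((v₂−1)/(v₁−1))·x₁ + (v₁−v₂)/(v₁−1)}. -/
def T2 (v : E2) : Set E2 :=
  {x ∈ SPD | (v 1 - 1) / (v 0 - 1) * x 0 + (v 0 - v 1) / (v 0 - 1) ≤ x 1}

/-- K₁(v,ε) = T₁(v)^ε ∩ {x ∈ 𝔖 : x₁ ≥ 1 and x₂ ≤ v₂}, where `·^ε` is the closed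
ε-neighbourhood. -/
def K1 (v : E2) (ε : ℝ) : Set E2 :=
  Metric.cthickening ε (T1 v) ∩ {x ∈ SPD | 1 ≤ x 0 ∧ x 1 ≤ v 1}

/-- K₂(v,ε) = T₂(v)^ε ∩ {x ∈ 𝔖 : x₁ ≤ v₁ and x₂ ≥ 1}. -/
def K2 (v : E2) (ε : ℝ) : Set E2 :=
  Metric.cthickening ε (T2 v) ∩ {x ∈ SPD | x 0 ≤ v 0 ∧ 1 ≤ x 1}

open Classical in
/-- The semi-cooperative strategy of player 1 determined by `v` and `ε`:
play C iff the current average payoff lies in K₁(v,ε). -/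
noncomputable def semi1 (v : E2) (ε : ℝ) (x : E2) : Bool :=
  if x ∈ K1 v ε then true else false

open Classical in
/-- The semi-cooperative strategy of player 2 determined by `v` and `ε`:
play C iff the current average payoff lies in K₂(v,ε). -/
noncomputable def semi2 (v : E2) (ε : ℝ) (x : E2) : Bool :=
  if x ∈ K2 v ε then true else false

/-- `x` is the trajectory (sequence of average payoffs), indexed from stage 1, of the
dynamical system induced by `f = u ∘ s`, starting at `x 1 ∈ 𝔖`:
x̄_{t+1} = (t·x̄_t + f(x̄_t))/(t+1). -/
def IsTrajPD (f : E2 → E2) (x : ℕ → E2) : Prop :=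
  x 1 ∈ SPD ∧ ∀ t : ℕ, 1 ≤ t →
    x (t + 1) = ((t : ℝ) + 1)⁻¹ • ((t : ℝ) • x t + f (x t))

open Filter

/-! At every point of `SPD` at least one player cooperates. Player 1 cooperates on and below the
line `ℓ` through `(1, 1)` and `b = (β, 3 - β / 2)`, where the payoff then lies on the line
`x + 2 y = 6` through `b`; player 2 defects right of `b` and cooperates, giving player 1 at least
`2`, on and `ε₂`-below `ℓ` left of `b`. For running averages such sign information on the
increments of a linear functional beyond a threshold bounds the functional eventually. A lower
bound `c` on `x` eventually bounds the gap `6 - x - 2 y` by `3 (β - c) / (β - 1)`, since beyond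
that the point is below `ℓ`; this bound lets player 2 cooperate up to `c + ε₂ (β - 1) / 3`, so
iterating from `c = 0` gives `liminf x ≥ β`. With `limsup x ≤ β` the gap tends to `0`, and the
averages converge to `b`. -/

open Topology

@[simp] lemma pt_zero (u v : ℝ) : pt u v 0 = u := rfl

@[simp] lemma pt_one (u v : ℝ) : pt u v 1 = v := rfl

lemma inner_pt (u v : ℝ) (p : E2) : inner ℝ (pt u v) p = u * p 0 + v * p 1 := by
  simp [PiLp.inner_apply, Fin.sum_univ_two, pt]
  ring

lemma dist_eq_abs_of_fst_eq {p q : E2} (h : p 0 = q 0) : dist p q = |p 1 - q 1| := by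
  simp [EuclideanSpace.dist_eq, Fin.sum_univ_two, h, Real.dist_eq, Real.sqrt_sq_eq_abs]

lemma tendsto_pt {ι : Type*} {l : Filter ι} {x : ι → E2} {u v : ℝ}
    (h0 : Tendsto (fun i => x i 0) l (𝓝 u)) (h1 : Tendsto (fun i => x i 1) l (𝓝 v)) :
    Tendsto x l (𝓝 (pt u v)) := by
  have h : Tendsto (fun i => WithLp.ofLp (x i)) l (𝓝 (WithLp.ofLp (pt u v))) :=
    tendsto_pi_nhds.2 (Fin.forall_fin_two.2 ⟨h0, h1⟩)
  simpa [Function.comp_def] using ((PiLp.continuous_toLp 2 _).tendsto _).comp h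

/- `SPD` is the parallelogram with vertices u(D,D), u(D,C), u(C,C), u(C,D); the backward direction
writes a point as the bilinear interpolation of the vertices. -/
lemma mem_SPD_iff {x : E2} : x ∈ SPD ↔
    3 ≤ 2 * x 0 + x 1 ∧ 2 * x 0 + x 1 ≤ 6 ∧ 3 ≤ x 0 + 2 * x 1 ∧ x 0 + 2 * x 1 ≤ 6 := by
  constructor
  · intro hx
    refine convexHull_min (t := {y : E2 | 3 ≤ 2 * y 0 + y 1 ∧ 2 * y 0 + y 1 ≤ 6 ∧
      3 ≤ y 0 + 2 * y 1 ∧ y 0 + 2 * y 1 ≤ 6}) ?_ ?_ hx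
    · rintro y (rfl | rfl | rfl | rfl) <;> norm_num
    · intro p hp q hq s t hs ht hst
      simp only [Set.mem_ofPred_eq, PiLp.add_apply, PiLp.smul_apply, smul_eq_mul] at hp hq ⊢
      obtain ⟨h1, h2, h3, h4⟩ := hp
      obtain ⟨g1, g2, g3, g4⟩ := hq
      refine ⟨by nlinarith, by nlinarith, by nlinarith, by nlinarith⟩
  · rintro ⟨h1, h2, h3, h4⟩
    set s := (2 * x 0 + x 1 - 3) / 3 with hs
    set r := (x 0 + 2 * x 1 - 3) / 3 with hr
    have hs0 : 0 ≤ s := by rw [hs]; linarith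
    have hs1 : s ≤ 1 := by rw [hs]; linarith
    have hr0 : 0 ≤ r := by rw [hr]; linarith
    have hr1 : r ≤ 1 := by rw [hr]; linarith
    have hS := convex_convexHull ℝ ({pt 2 2, pt 0 3, pt 3 0, pt 1 1} : Set E2)
    have hv : ∀ v ∈ ({pt 2 2, pt 0 3, pt 3 0, pt 1 1} : Set E2), v ∈ SPD :=
      fun v hv => subset_convexHull ℝ _ hv
    have hlow := hS (hv (pt 1 1) (by simp)) (hv (pt 3 0) (by simp))
      (a := 1 - s) (b := s) (by linarith) (by linarith) (by ring)
    have hhigh := hS (hv (pt 0 3) (by simp)) (hv (pt 2 2) (by simp))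
      (a := 1 - s) (b := s) (by linarith) (by linarith) (by ring)
    change x ∈ convexHull ℝ _
    convert hS hlow hhigh (a := 1 - r) (b := r) (by linarith) (by linarith) (by ring) using 1
    refine PiLp.ext fun i => ?_
    fin_cases i <;> simp [hs, hr] <;> ring

lemma payoffPD_mem_SPD (p q : Bool) : payoffPD p q ∈ SPD := by
  cases p <;> cases q <;> exact subset_convexHull ℝ _ (by simp [payoffPD])

lemma isCompact_SPD : IsCompact SPD :=
  (Set.toFinite _).isCompact_convexHull ℝ

lemma eventually_le_of_le_max_sub {u : ℕ → ℝ} {K d : ℝ} (hd : 0 < d)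
    (h : ∀ᶠ t in atTop, u (t + 1) ≤ max (u t - d) K) : ∀ᶠ t in atTop, u t ≤ K := by
  obtain ⟨T, hT⟩ := eventually_atTop.1 h
  have key : ∀ n : ℕ, u (T + n) ≤ max (u T - n * d) K := by
    intro n
    induction n with
    | zero => simp
    | succ n ih =>
      refine (hT (T + n) (Nat.le_add_right _ _)).trans (max_le ?_ (le_max_right _ _))
      rcases le_total (u T - n * d) K with h | h
      · rw [max_eq_right h] at ih
        exact le_max_of_le_right (by linarith)
      · rw [max_eq_left h] at ih
        exact le_max_of_le_left (by push_cast; linarith)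
  obtain ⟨N, hN⟩ := exists_nat_gt ((u T - K) / d)
  rw [div_lt_iff₀ hd] at hN
  refine eventually_atTop.2 ⟨T + N, fun t ht => ?_⟩
  obtain ⟨n, rfl⟩ := Nat.exists_eq_add_of_le (le_of_add_le_left ht)
  have hNn : (N : ℝ) ≤ n := by exact_mod_cast le_of_add_le_add_left ht
  refine (key n).trans (max_le ?_ le_rfl)
  nlinarith

lemma eventually_lt_of_drift {y g : ℕ → ℝ} {θ γ M c : ℝ}
    (hrec : ∀ᶠ t : ℕ in atTop, ((t : ℝ) + 1) * y (t + 1) = t * y t + g t)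
    (hg : ∀ᶠ t in atTop, g t ≤ M) (hdrift : ∀ᶠ t in atTop, θ < y t → g t ≤ γ)
    (hθ : θ < c) (hγ : γ < c) : ∀ᶠ t in atTop, y t < c := by
  set m := (max θ γ + c) / 2 with hm
  have hθm : θ < m := by have := le_max_left θ γ; linarith
  have hγm : γ < m := by have := le_max_right θ γ; linarith
  have hmc : m < c := by have := max_lt hθ hγ; linarith
  -- `t * (y t - m)` drops by `m - γ` while positive and is at most `M - m` after a step from `≤ 0`
  have hu : ∀ᶠ t : ℕ in atTop,
      ((t + 1 : ℕ) : ℝ) * (y (t + 1) - m) ≤ max (t * (y t - m) - (m - γ)) (M - m) := by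
    filter_upwards [hrec, hg, hdrift] with t hr hgM hgγ
    have ht : (0 : ℝ) ≤ t := t.cast_nonneg
    push_cast
    rcases le_or_gt (y t) m with h | h
    · exact le_max_of_le_right (by nlinarith)
    · exact le_max_of_le_left (by nlinarith [hgγ (hθm.trans h)])
  have hlarge : ∀ᶠ t : ℕ in atTop, M - m < t * (c - m) :=
    (tendsto_natCast_atTop_atTop.atTop_mul_const (sub_pos.2 hmc)).eventually_gt_atTop _
  filter_upwards [eventually_le_of_le_max_sub (u := fun t : ℕ => (t : ℝ) * (y t - m))
    (sub_pos.2 hγm) hu, hlarge] with t h1 h2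
  have := lt_of_mul_lt_mul_left (h1.trans_lt h2) t.cast_nonneg
  linarith

lemma eventually_gt_of_drift {y g : ℕ → ℝ} {θ γ M c : ℝ}
    (hrec : ∀ᶠ t : ℕ in atTop, ((t : ℝ) + 1) * y (t + 1) = t * y t + g t)
    (hg : ∀ᶠ t in atTop, M ≤ g t) (hdrift : ∀ᶠ t in atTop, y t < θ → γ ≤ g t)
    (hθ : c < θ) (hγ : c < γ) : ∀ᶠ t in atTop, c < y t := by
  have h := eventually_lt_of_drift (y := fun t => -y t) (g := fun t => -g t) (θ := -θ)
    (γ := -γ) (M := -M) (c := -c)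
    (by filter_upwards [hrec] with t ht; linarith)
    (by filter_upwards [hg] with t ht; linarith)
    (by filter_upwards [hdrift] with t ht h; linarith [ht (by linarith)])
    (by linarith) (by linarith)
  filter_upwards [h] with t ht
  linarith

lemma Antitone.forall_lt_of_propagate {P : ℝ → Prop} (hP : Antitone P) {c₀ L κ : ℝ}
    (hκ : 0 < κ) (h₀ : P c₀) (hstep : ∀ c < L, P c → ∀ c' < L, c' ≤ c + κ → P c') :
    ∀ c < L, P c := by
  have key : ∀ n : ℕ, ∀ c < L, c ≤ c₀ + n * κ → P c := by
    intro n
    induction n with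
    | zero => exact fun c _ hc => hP (by simpa using hc) h₀
    | succ n ih =>
      intro c hcL hc
      push_cast at hc
      exact hstep (c - κ) (by linarith) (ih _ (by linarith) (by linarith)) c hcL (by linarith)
  intro c hc
  obtain ⟨n, hn⟩ := exists_nat_ge ((c - c₀) / κ)
  rw [div_le_iff₀ hκ] at hn
  exact key n c hc (by linarith)

section Trajectory

variable {f : E2 → E2} {x : ℕ → E2}

lemma IsTrajPD.mem_SPD (hf : ∀ p, f p ∈ SPD) (hx : IsTrajPD f x) {t : ℕ} (ht : 1 ≤ t) :
    x t ∈ SPD := by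
  induction t, ht using Nat.le_induction with
  | base => exact hx.1
  | succ t ht ih =>
    have ht' : (0 : ℝ) < t + 1 := by positivity
    have h : (t / (t + 1) : ℝ) • x t + (1 / (t + 1) : ℝ) • f (x t) ∈ SPD :=
      convex_convexHull ℝ _ ih (hf (x t)) (by positivity) (by positivity) (by field_simp)
    rw [hx.2 t ht]
    convert h using 1
    rw [smul_add, smul_smul, div_eq_inv_mul, one_div]

lemma IsTrajPD.eventually_mem_SPD (hf : ∀ p, f p ∈ SPD) (hx : IsTrajPD f x) :
    ∀ᶠ t in atTop, x t ∈ SPD :=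
  eventually_atTop.2 ⟨1, fun _ ht => hx.mem_SPD hf ht⟩

lemma IsTrajPD.inner_succ (hx : IsTrajPD f x) (w : E2) {t : ℕ} (ht : 1 ≤ t) :
    ((t : ℝ) + 1) * inner ℝ w (x (t + 1)) = t * inner ℝ w (x t) + inner ℝ w (f (x t)) := by
  rw [hx.2 t ht, inner_smul_right, inner_add_right, inner_smul_right, ← mul_assoc,
    mul_inv_cancel₀ (by positivity), one_mul]

lemma IsTrajPD.eventually_inner_lt (hf : ∀ p, f p ∈ SPD) (hx : IsTrajPD f x) (w : E2)
    {θ γ c : ℝ} (hdrift : ∀ᶠ t in atTop, θ < inner ℝ w (x t) → inner ℝ w (f (x t)) ≤ γ)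
    (hθ : θ < c) (hγ : γ < c) : ∀ᶠ t in atTop, inner ℝ w (x t) < c := by
  obtain ⟨M, hM⟩ := isCompact_SPD.bddAbove_image (f := fun q => inner ℝ w q) (by fun_prop)
  exact eventually_lt_of_drift (eventually_atTop.2 ⟨1, fun t ht => hx.inner_succ w ht⟩)
    (M := M) (Eventually.of_forall fun t => hM ⟨_, hf (x t), rfl⟩) hdrift hθ hγ

lemma IsTrajPD.eventually_lt_inner (hf : ∀ p, f p ∈ SPD) (hx : IsTrajPD f x) (w : E2)
    {θ γ c : ℝ} (hdrift : ∀ᶠ t in atTop, inner ℝ w (x t) < θ → γ ≤ inner ℝ w (f (x t)))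
    (hθ : c < θ) (hγ : c < γ) : ∀ᶠ t in atTop, c < inner ℝ w (x t) := by
  obtain ⟨M, hM⟩ := isCompact_SPD.bddBelow_image (f := fun q => inner ℝ w q) (by fun_prop)
  exact eventually_gt_of_drift (eventually_atTop.2 ⟨1, fun t ht => hx.inner_succ w ht⟩)
    (M := M) (Eventually.of_forall fun t => hM ⟨_, hf (x t), rfl⟩) hdrift hθ hγ

end Trajectory

section Phases

variable {f : E2 → E2} {x : ℕ → E2} {β ε : ℝ}

lemma IsTrajPD.eventually_fst_lt (hβ : 0 ≤ β) (hf : ∀ p, f p ∈ SPD)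
    (hright : ∀ p ∈ SPD, β < p 0 → f p 0 = 0) (hx : IsTrajPD f x) {c : ℝ} (hc : β < c) :
    ∀ᶠ t in atTop, x t 0 < c := by
  have h := hx.eventually_inner_lt hf (pt 1 0) (θ := β) (γ := 0) ?_ hc (by linarith)
  · simpa [inner_pt] using h
  · filter_upwards [hx.eventually_mem_SPD hf] with t ht hlt
    simp only [inner_pt, one_mul, zero_mul, add_zero] at hlt ⊢
    exact (hright _ ht hlt).le

lemma IsTrajPD.eventually_lt_fst_add_snd (hf : ∀ p, f p ∈ SPD)
    (hsum : ∀ p ∈ SPD, 3 ≤ f p 0 + f p 1) (hx : IsTrajPD f x) {c : ℝ} (hc : c < 3) :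
    ∀ᶠ t in atTop, c < x t 0 + x t 1 := by
  have h := hx.eventually_lt_inner hf (pt 1 1) (θ := 3) (γ := 3) ?_ hc hc
  · simpa [inner_pt] using h
  · filter_upwards [hx.eventually_mem_SPD hf] with t ht _
    simpa [inner_pt] using hsum _ ht

lemma IsTrajPD.eventually_one_lt_snd (hβ : 1 < β) (hβ2 : β ≤ 2) (hf : ∀ p, f p ∈ SPD)
    (hsum : ∀ p ∈ SPD, 3 ≤ f p 0 + f p 1)
    (hbelow : ∀ p ∈ SPD, 2 * (β - 1) * (p 1 - 1) ≤ (4 - β) * (p 0 - 1) →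
      f p 0 + 2 * f p 1 = 6)
    (hx : IsTrajPD f x) : ∀ᶠ t in atTop, 1 < x t 1 := by
  have h := hx.eventually_lt_inner hf (pt 0 1) (θ := 5 / 4) (γ := 2) (c := 1) ?_
    (by norm_num) (by norm_num)
  · simpa [inner_pt] using h
  · filter_upwards [hx.eventually_mem_SPD hf,
      hx.eventually_lt_fst_add_snd hf hsum (c := 11 / 4) (by norm_num)] with t ht hS hlt
    simp only [inner_pt, zero_mul, one_mul, zero_add] at hlt ⊢
    -- `y < 5 / 4` and `x + y > 11 / 4` put the point below the line through `(1, 1)` and `b`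
    have hline := hbelow _ ht (by nlinarith)
    linarith [(mem_SPD_iff.1 (hf (x t))).2.1]

lemma IsTrajPD.eventually_lt_fst_add_two_mul_snd (hβ : 1 < β) (hf : ∀ p, f p ∈ SPD)
    (hbelow : ∀ p ∈ SPD, 2 * (β - 1) * (p 1 - 1) ≤ (4 - β) * (p 0 - 1) →
      f p 0 + 2 * f p 1 = 6)
    (hx : IsTrajPD f x) {c : ℝ} (hcβ : c ≤ β) (hc : ∀ᶠ t in atTop, c ≤ x t 0) {d : ℝ}
    (hd : d < 6 - 3 * (β - c) / (β - 1)) : ∀ᶠ t in atTop, d < x t 0 + 2 * x t 1 := by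
  have hβ1 : 0 < β - 1 := sub_pos.2 hβ
  have h6 : d < 6 := hd.trans_le (by linarith [div_nonneg (by linarith : 0 ≤ 3 * (β - c)) hβ1.le])
  have h := hx.eventually_lt_inner hf (pt 1 2) (γ := 6) ?_ hd h6
  · simpa [inner_pt] using h
  · filter_upwards [hx.eventually_mem_SPD hf, hc] with t ht hct hlt
    simp only [inner_pt, one_mul] at hlt ⊢
    have hgap : 3 * (β - c) < (6 - (x t 0 + 2 * x t 1)) * (β - 1) := by
      rw [← div_lt_iff₀ hβ1]; linarith
    exact (hbelow _ ht (by nlinarith)).ge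

lemma IsTrajPD.eventually_lt_fst_of_lt_fst_add_two_mul_snd (hβ : 1 < β) (hβ2 : β ≤ 2)
    (hf : ∀ p, f p ∈ SPD)
    (habove : ∀ p ∈ SPD, p 0 ≤ β → 1 ≤ p 1 →
      (4 - β) * (p 0 - 1) - 2 * (β - 1) * (p 1 - 1) ≤ 2 * ε * (β - 1) → 2 ≤ f p 0)
    (hx : IsTrajPD f x) (hY : ∀ᶠ t in atTop, 1 < x t 1) {d θ : ℝ}
    (hψ : ∀ᶠ t in atTop, d < x t 0 + 2 * x t 1) (hθ : θ ≤ β)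
    (hdθ : (β - 1) * (6 - d) ≤ 3 * (β - θ) + 2 * ε * (β - 1)) {c : ℝ} (hc : c < θ) :
    ∀ᶠ t in atTop, c < x t 0 := by
  have h := hx.eventually_lt_inner hf (pt 1 0) (γ := 2) ?_ hc (by linarith)
  · simpa [inner_pt] using h
  · filter_upwards [hx.eventually_mem_SPD hf, hY, hψ] with t ht hYt hψt hlt
    simp only [inner_pt, one_mul, zero_mul, add_zero] at hlt ⊢
    have := mul_lt_mul_of_pos_left hψt (sub_pos.2 hβ)
    exact habove _ ht (by linarith) hYt.le (by nlinarith)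

lemma IsTrajPD.eventually_lt_fst_of_le_fst (hβ : 1 < β) (hβ2 : β ≤ 2) (hε : 0 < ε)
    (hf : ∀ p, f p ∈ SPD)
    (hbelow : ∀ p ∈ SPD, 2 * (β - 1) * (p 1 - 1) ≤ (4 - β) * (p 0 - 1) →
      f p 0 + 2 * f p 1 = 6)
    (habove : ∀ p ∈ SPD, p 0 ≤ β → 1 ≤ p 1 →
      (4 - β) * (p 0 - 1) - 2 * (β - 1) * (p 1 - 1) ≤ 2 * ε * (β - 1) → 2 ≤ f p 0)
    (hx : IsTrajPD f x) (hY : ∀ᶠ t in atTop, 1 < x t 1) {c : ℝ} (hcβ : c < β)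
    (hc : ∀ᶠ t in atTop, c ≤ x t 0) {c' : ℝ} (hc'β : c' < β)
    (hc' : c' < c + ε * (β - 1) / 3) : ∀ᶠ t in atTop, c' < x t 0 := by
  have hβ1 : 0 < β - 1 := sub_pos.2 hβ
  have hψ := hx.eventually_lt_fst_add_two_mul_snd hβ hf hbelow hcβ.le hc
    (d := 6 - 3 * (β - c) / (β - 1) - ε) (by linarith)
  have hθ := min_le_left (c + ε * (β - 1) / 3) ((c' + β) / 2)
  refine hx.eventually_lt_fst_of_lt_fst_add_two_mul_snd hβ hβ2 hf habove hY hψ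
    (θ := min (c + ε * (β - 1) / 3) ((c' + β) / 2)) ((min_le_right _ _).trans (by linarith)) ?_
    (lt_min hc' (by linarith))
  have : (β - 1) * (6 - (6 - 3 * (β - c) / (β - 1) - ε)) = 3 * (β - c) + ε * (β - 1) := by
    field_simp
    ring
  linarith

lemma IsTrajPD.eventually_lt_fst (hβ : 1 < β) (hβ2 : β ≤ 2) (hε : 0 < ε)
    (hf : ∀ p, f p ∈ SPD) (hsum : ∀ p ∈ SPD, 3 ≤ f p 0 + f p 1)
    (hbelow : ∀ p ∈ SPD, 2 * (β - 1) * (p 1 - 1) ≤ (4 - β) * (p 0 - 1) →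
      f p 0 + 2 * f p 1 = 6)
    (habove : ∀ p ∈ SPD, p 0 ≤ β → 1 ≤ p 1 →
      (4 - β) * (p 0 - 1) - 2 * (β - 1) * (p 1 - 1) ≤ 2 * ε * (β - 1) → 2 ≤ f p 0)
    (hx : IsTrajPD f x) {c : ℝ} (hc : c < β) : ∀ᶠ t in atTop, c < x t 0 := by
  have hY := hx.eventually_one_lt_snd hβ hβ2 hf hsum hbelow
  have hanti : Antitone fun c : ℝ => ∀ᶠ t in atTop, c ≤ x t 0 :=
    fun _ _ hle h => h.mono fun _ ht => hle.trans ht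
  have h₀ : ∀ᶠ t in atTop, (0 : ℝ) ≤ x t 0 := by
    filter_upwards [hx.eventually_mem_SPD hf] with t ht
    linarith [mem_SPD_iff.1 ht]
  have hκ : 0 < ε * (β - 1) := mul_pos hε (sub_pos.2 hβ)
  have key := hanti.forall_lt_of_propagate (κ := ε * (β - 1) / 6) (by positivity) h₀
    fun c hcβ hc c' hc'β hc' => (hx.eventually_lt_fst_of_le_fst hβ hβ2 hε hf hbelow habove
      hY hcβ hc hc'β (by linarith)).mono fun _ => le_of_lt
  filter_upwards [key ((c + β) / 2) (by linarith)] with t ht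
  linarith

theorem IsTrajPD.tendsto (hβ : 1 < β) (hβ2 : β ≤ 2) (hε : 0 < ε)
    (hf : ∀ p, f p ∈ SPD) (hsum : ∀ p ∈ SPD, 3 ≤ f p 0 + f p 1)
    (hright : ∀ p ∈ SPD, β < p 0 → f p 0 = 0)
    (hbelow : ∀ p ∈ SPD, 2 * (β - 1) * (p 1 - 1) ≤ (4 - β) * (p 0 - 1) →
      f p 0 + 2 * f p 1 = 6)
    (habove : ∀ p ∈ SPD, p 0 ≤ β → 1 ≤ p 1 →
      (4 - β) * (p 0 - 1) - 2 * (β - 1) * (p 1 - 1) ≤ 2 * ε * (β - 1) → 2 ≤ f p 0)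
    (hx : IsTrajPD f x) : Tendsto x atTop (𝓝 (pt β (3 - β / 2))) := by
  have hβ1 : 0 < β - 1 := sub_pos.2 hβ
  have hX : Tendsto (fun t => x t 0) atTop (𝓝 β) := tendsto_order.2
    ⟨fun c hc => hx.eventually_lt_fst hβ hβ2 hε hf hsum hbelow habove hc,
      fun c hc => hx.eventually_fst_lt (by linarith) hf hright hc⟩
  have hψ : Tendsto (fun t => x t 0 + 2 * x t 1) atTop (𝓝 6) := by
    refine tendsto_order.2 ⟨fun d hd => ?_, fun d hd => ?_⟩
    · have hc : β - (β - 1) * (6 - d) / 6 < β := by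
        have : 0 < (β - 1) * (6 - d) := mul_pos hβ1 (by linarith)
        linarith
      refine hx.eventually_lt_fst_add_two_mul_snd hβ hf hbelow hc.le
        ((hx.eventually_lt_fst hβ hβ2 hε hf hsum hbelow habove hc).mono fun _ => le_of_lt) ?_
      rw [show 3 * (β - (β - ((β - 1) * (6 - d) / 6))) / (β - 1) = (6 - d) / 2 by
        field_simp; ring]
      linarith
    · filter_upwards [hx.eventually_mem_SPD hf] with t ht
      linarith [mem_SPD_iff.1 ht]
  refine tendsto_pt hX ?_
  rw [show 3 - β / 2 = (6 - β) / 2 by ring]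
  exact ((hψ.sub hX).div_const 2).congr fun t => by ring

end Phases

section SemiCooperative

variable {α β ε ε₁ ε₂ : ℝ} {x : E2}

-- The boundary of `T1 (α, 3 - α / 2)` is the line through `(1, 1)` and `(α, 3 - α / 2)`.
lemma mem_T1_iff (hα : 1 < α) : x ∈ T1 (pt α (3 - α / 2)) ↔
    x ∈ SPD ∧ 2 * (α - 1) * (x 1 - 1) ≤ (4 - α) * (x 0 - 1) := by
  refine and_congr_right fun _ => ?_
  simp only [pt_zero, pt_one]
  rw [div_mul_eq_mul_div, ← add_div, le_div_iff₀ (sub_pos.2 hα)]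
  constructor <;> intro h <;> linarith

lemma mem_T2_iff (hβ : 1 < β) : x ∈ T2 (pt β (3 - β / 2)) ↔
    x ∈ SPD ∧ (4 - β) * (x 0 - 1) ≤ 2 * (β - 1) * (x 1 - 1) := by
  refine and_congr_right fun _ => ?_
  simp only [pt_zero, pt_one]
  rw [div_mul_eq_mul_div, ← add_div, div_le_iff₀ (sub_pos.2 hβ)]
  constructor <;> intro h <;> linarith

lemma mem_K1_or_mem_K2 (hα : 1 < α) (hαβ : α < β) (hβ2 : β ≤ 2) (hx : x ∈ SPD) :
    x ∈ K1 (pt α (3 - α / 2)) ε₁ ∨ x ∈ K2 (pt β (3 - β / 2)) ε₂ := by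
  by_cases h : 1 ≤ x 0 ∧ x 1 ≤ 3 - α / 2 ∧ 2 * (α - 1) * (x 1 - 1) ≤ (4 - α) * (x 0 - 1)
  · exact .inl ⟨Metric.self_subset_cthickening _ ((mem_T1_iff hα).2 ⟨hx, h.2.2⟩), hx, h.1, h.2.1⟩
  obtain ⟨s1, -, -, s4⟩ := mem_SPD_iff.1 hx
  have hα1 : 0 < α - 1 := sub_pos.2 hα
  have key : x 0 ≤ β ∧ 1 ≤ x 1 ∧ (4 - β) * (x 0 - 1) ≤ 2 * (β - 1) * (x 1 - 1) := by
    rcases lt_or_ge (x 0) 1 with h0 | h0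
    · exact ⟨by linarith, by linarith, by nlinarith⟩
    rcases lt_or_ge (3 - α / 2) (x 1) with h1 | h1
    · refine ⟨by linarith, by linarith, ?_⟩
      nlinarith [mul_le_mul_of_nonneg_left (by linarith : x 0 - 1 ≤ β - 1)
        (by linarith : (0 : ℝ) ≤ 4 - β),
        mul_le_mul_of_nonneg_left (by linarith : 2 - β / 2 ≤ x 1 - 1)
          (by linarith : (0 : ℝ) ≤ β - 1)]
    have h2 : (4 - α) * (x 0 - 1) < 2 * (α - 1) * (x 1 - 1) := by
      by_contra h2
      exact h ⟨h0, h1, not_lt.1 h2⟩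
    have hx1 : 1 < x 1 := by
      nlinarith [mul_nonneg (by linarith : (0 : ℝ) ≤ 4 - α) (sub_nonneg.2 h0)]
    refine ⟨by nlinarith, hx1.le, le_of_mul_le_mul_left ?_ hα1⟩
    nlinarith [mul_nonneg (sub_nonneg.2 hαβ.le) (sub_nonneg.2 h0)]
  exact .inr ⟨Metric.self_subset_cthickening _ ((mem_T2_iff (hα.trans hαβ)).2 ⟨hx, key.2.2⟩),
    hx, key.1, key.2.1⟩

lemma mem_K1_of_below (hα : 1 < α) (hαβ : α < β) (hβ2 : β ≤ 2) (hx : x ∈ SPD)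
    (h : 2 * (β - 1) * (x 1 - 1) ≤ (4 - β) * (x 0 - 1)) : x ∈ K1 (pt α (3 - α / 2)) ε₁ := by
  obtain ⟨s1, -, -, s4⟩ := mem_SPD_iff.1 hx
  have hβ1 : 0 < β - 1 := by linarith
  have h0 : 1 ≤ x 0 := by
    by_contra h0
    nlinarith [mul_pos (by linarith : (0 : ℝ) < 4 - β) (by linarith : 0 < 1 - x 0)]
  have h1 : x 1 ≤ 3 - β / 2 := by
    rcases le_or_gt (x 0) β with hxβ | hxβ
    · nlinarith [mul_le_mul_of_nonneg_left (by linarith : x 0 - 1 ≤ β - 1)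
        (by linarith : (0 : ℝ) ≤ 4 - β)]
    · linarith
  have hline : 2 * (α - 1) * (x 1 - 1) ≤ (4 - α) * (x 0 - 1) := by
    rcases le_or_gt (x 1) 1 with hx1 | hx1
    · nlinarith [mul_nonneg (by linarith : (0 : ℝ) ≤ 4 - α) (sub_nonneg.2 h0)]
    · refine le_of_mul_le_mul_left ?_ hβ1
      nlinarith [mul_nonneg (sub_nonneg.2 hαβ.le) (sub_nonneg.2 h0),
        mul_le_mul_of_nonneg_left h (by linarith : (0 : ℝ) ≤ α - 1)]
  exact ⟨Metric.self_subset_cthickening _ ((mem_T1_iff hα).2 ⟨hx, hline⟩), hx, h0,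
    by simp only [pt_one]; linarith⟩

lemma mem_K2_of_le (hβ : 1 < β) (hβ2 : β ≤ 2) (hx : x ∈ SPD) (h0 : x 0 ≤ β) (h1 : 1 ≤ x 1)
    (hε : (4 - β) * (x 0 - 1) - 2 * (β - 1) * (x 1 - 1) ≤ 2 * ε * (β - 1)) :
    x ∈ K2 (pt β (3 - β / 2)) ε := by
  refine ⟨?_, hx, h0, h1⟩
  rcases le_or_gt ((4 - β) * (x 0 - 1)) (2 * (β - 1) * (x 1 - 1)) with hle | hlt
  · exact Metric.self_subset_cthickening _ ((mem_T2_iff hβ).2 ⟨hx, hle⟩)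
  have hβ1 : 0 < β - 1 := by linarith
  obtain ⟨s1, -, s3, -⟩ := mem_SPD_iff.1 hx
  -- the point of the line through `(1, 1)` and `b` vertically above `x`
  set y := 1 + (4 - β) * (x 0 - 1) / (2 * (β - 1)) with hy_def
  have hy : 2 * (β - 1) * (y - 1) = (4 - β) * (x 0 - 1) := by
    rw [hy_def]
    field_simp
    ring
  have hx0 : 1 ≤ x 0 := by
    by_contra hx0
    nlinarith [mul_pos (by linarith : (0 : ℝ) < 4 - β) (by linarith : 0 < 1 - x 0)]
  have hxy : x 1 < y := by nlinarith
  have hyx : y - x 1 ≤ ε := le_of_mul_le_mul_left (by nlinarith) (by linarith : 0 < 2 * (β - 1))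
  have hq : pt (x 0) y ∈ T2 (pt β (3 - β / 2)) := by
    refine (mem_T2_iff hβ).2 ⟨mem_SPD_iff.2 ⟨?_, ?_, ?_, ?_⟩, ?_⟩ <;> simp only [pt_zero, pt_one]
    · linarith
    · refine le_of_mul_le_mul_left ?_ (by linarith : 0 < 2 * (β - 1))
      nlinarith [mul_le_mul_of_nonneg_left h0 (by linarith : (0 : ℝ) ≤ β)]
    · linarith
    · refine le_of_mul_le_mul_left ?_ (by linarith : 0 < 2 * (β - 1))
      nlinarith
    · linarith
  refine Metric.mem_cthickening_of_dist_le x _ ε _ hq ?_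
  rw [dist_eq_abs_of_fst_eq (p := x) (q := pt (x 0) y) rfl, pt_one, abs_sub_comm,
    abs_of_pos (by linarith)]
  exact hyx

end SemiCooperative

noncomputable def semiPayoff (α β ε₁ ε₂ : ℝ) (p : E2) : E2 :=
  payoffPD (semi1 (pt α (3 - α / 2)) ε₁ p) (semi2 (pt β (3 - β / 2)) ε₂ p)

section SemiPayoff

variable {α β ε₁ ε₂ : ℝ} {p : E2}

lemma semiPayoff_mem_SPD (p : E2) : semiPayoff α β ε₁ ε₂ p ∈ SPD := payoffPD_mem_SPD _ _

lemma three_le_semiPayoff (hα : 1 < α) (hαβ : α < β) (hβ2 : β ≤ 2) (hp : p ∈ SPD) :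
    3 ≤ semiPayoff α β ε₁ ε₂ p 0 + semiPayoff α β ε₁ ε₂ p 1 := by
  unfold semiPayoff
  rcases mem_K1_or_mem_K2 (ε₁ := ε₁) (ε₂ := ε₂) hα hαβ hβ2 hp with h | h
  · simp only [semi1, if_pos h]
    cases semi2 (pt β (3 - β / 2)) ε₂ p <;> norm_num [payoffPD]
  · simp only [semi2, if_pos h]
    cases semi1 (pt α (3 - α / 2)) ε₁ p <;> norm_num [payoffPD]

lemma semiPayoff_fst_eq_zero (hα : 1 < α) (hαβ : α < β) (hβ2 : β ≤ 2) (hp : p ∈ SPD)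
    (hβp : β < p 0) : semiPayoff α β ε₁ ε₂ p 0 = 0 := by
  have h2 : p ∉ K2 (pt β (3 - β / 2)) ε₂ := fun h => hβp.not_ge h.2.2.1
  have h1 : p ∈ K1 (pt α (3 - α / 2)) ε₁ := (mem_K1_or_mem_K2 hα hαβ hβ2 hp).resolve_right h2
  simp [semiPayoff, semi1, semi2, h1, h2, payoffPD]

lemma semiPayoff_fst_add_two_mul_snd (hα : 1 < α) (hαβ : α < β) (hβ2 : β ≤ 2) (hp : p ∈ SPD)
    (h : 2 * (β - 1) * (p 1 - 1) ≤ (4 - β) * (p 0 - 1)) :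
    semiPayoff α β ε₁ ε₂ p 0 + 2 * semiPayoff α β ε₁ ε₂ p 1 = 6 := by
  simp only [semiPayoff, semi1, if_pos (mem_K1_of_below hα hαβ hβ2 hp h)]
  cases semi2 (pt β (3 - β / 2)) ε₂ p <;> norm_num [payoffPD]

lemma two_le_semiPayoff_fst (hβ : 1 < β) (hβ2 : β ≤ 2) (hp : p ∈ SPD) (h0 : p 0 ≤ β)
    (h1 : 1 ≤ p 1) (hε : (4 - β) * (p 0 - 1) - 2 * (β - 1) * (p 1 - 1) ≤ 2 * ε₂ * (β - 1)) :
    2 ≤ semiPayoff α β ε₁ ε₂ p 0 := by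
  simp only [semiPayoff, semi2, if_pos (mem_K2_of_le hβ hβ2 hp h0 h1 hε)]
  cases semi1 (pt α (3 - α / 2)) ε₁ p <;> norm_num [payoffPD]

end SemiPayoff

lemma one_le_fst_of_mem_BPD {p : E2} (hp : p ∈ BPD) : 1 ≤ p 0 := by
  rcases hp with ⟨u, hu, -, rfl⟩ | ⟨v, -, hv, rfl⟩ <;> simp only [pt_zero] <;> linarith

lemma eq_pt_of_mem_BPD {p : E2} (hp : p ∈ BPD) (h2 : p 0 ≤ 2) : p = pt (p 0) (3 - p 0 / 2) := by
  rcases hp with ⟨u, -, -, rfl⟩ | ⟨v, -, hv, rfl⟩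
  · rfl
  · simp only [pt_zero] at h2 ⊢
    obtain rfl : v = 2 := by linarith
    norm_num

theorem stmt14_general (a b : E2) (ha : a ∈ BPD) (ha1 : a ≠ pt 1 (5 / 2))
    (hb : b ∈ BPD)
    (ε₁ ε₂ : ℝ) (hε₂ : 0 < ε₂)
    (hab : a 0 < b 0) (hb2' : b 0 ≤ 2) (x : ℕ → E2)
    (hx : IsTrajPD (fun p => payoffPD (semi1 a ε₁ p) (semi2 b ε₂ p)) x) :
    Tendsto x atTop (nhds b) := by
  have ha_one := one_le_fst_of_mem_BPD ha
  obtain ⟨α, rfl⟩ : ∃ α, a = pt α (3 - α / 2) :=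
    ⟨_, eq_pt_of_mem_BPD ha (hab.trans_le hb2').le⟩
  obtain ⟨β, rfl⟩ : ∃ β, b = pt β (3 - β / 2) := ⟨_, eq_pt_of_mem_BPD hb hb2'⟩
  simp only [pt_zero] at hab hb2' ha_one
  have hα : 1 < α := ha_one.lt_of_ne fun h => ha1 (by rw [← h]; norm_num)
  have hβ : 1 < β := hα.trans hab
  exact IsTrajPD.tendsto (f := semiPayoff α β ε₁ ε₂) hβ hb2' hε₂ semiPayoff_mem_SPD
    (fun _ => three_le_semiPayoff hα hab hb2') (fun _ => semiPayoff_fst_eq_zero hα hab hb2')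
    (fun _ => semiPayoff_fst_add_two_mul_snd hα hab hb2')
    (fun _ => two_le_semiPayoff_fst hβ hb2') hx

/-- Theorem 4.2, case a₁ < b₁ ≤ 2: if player 1 plays the semi-cooperative strategy
determined by a and player 2 the one determined by b, with a₁ < b₁ ≤ 2, then every
trajectory of average payoffs, from any initial point in 𝔖, converges to b. -/
theorem stmt14 (a b : E2) (ha : a ∈ BPD) (ha1 : a ≠ pt 1 (5 / 2)) (ha2 : a ≠ pt (5 / 2) 1)
    (hb : b ∈ BPD) (hb1 : b ≠ pt 1 (5 / 2)) (hb2 : b ≠ pt (5 / 2) 1)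
    (ε₁ ε₂ : ℝ) (hε₁ : 0 < ε₁) (hε₂ : 0 < ε₂)
    (hab : a 0 < b 0) (hb2' : b 0 ≤ 2) (x : ℕ → E2)
    (hx : IsTrajPD (fun p => payoffPD (semi1 a ε₁ p) (semi2 b ε₂ p)) x) :
    Tendsto x atTop (nhds b) :=
  stmt14_general a b ha ha1 hb ε₁ ε₂ hε₂ hab hb2' x hx
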